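/- arXiv:2601.22449 — 4 statements merged into one kernel-verified Lean document; each statement's English description precedes it below -/
import Mathlib

section
/- Combining the two previous sandwich inequalities: under the shared terminal condition and assumptions, X_0 ≼ V_0 ≼ Y_0, and consequently ln det X_0 ≤ ln det V_0 ≤ ln det Y_0 whenever X_0 is positive definite. -/
/-!
One Riccati step `V = C + Fᵀ W F - Fᵀ W B S⁻¹ Bᵀ W F`, with `S = R + Bᵀ W B` and gain
`K = -S⁻¹ Bᵀ W F`, can be rewritten by completing the square as
`V = C + (F + B K)ᵀ W (F + B K) + Kᵀ R K`, and compared with the open-loop step as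
`C + Fᵀ Y F - V = Fᵀ (Y - W) F + (Bᵀ W F)ᵀ S⁻¹ (Bᵀ W F)`.
Congruences and sums of positive semidefinite matrices are positive semidefinite, so the
sandwich propagates backwards from `t = T`, where all three recursions equal `C T`.
For the determinants, `A ≤ B` with `A` positive definite gives `1 ≤ A^{-1/2} B A^{-1/2}`,
whose eigenvalues, hence determinant, are at least `1`.
-/

open Matrix

namespace Matrix

variable {ι κ : Type*} [Fintype ι] [Fintype κ]

theorem PosSemidef.transpose_mul_mul_same {M : Matrix ι ι ℝ} (hM : M.PosSemidef)
    (A : Matrix ι κ ℝ) : (Aᵀ * M * A).PosSemidef := by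
  simpa [conjTranspose_eq_transpose_of_trivial] using hM.conjTranspose_mul_mul_same A

variable [DecidableEq ι]

open scoped MatrixOrder

theorem one_le_det_of_one_le {M : Matrix ι ι ℝ} (hM : 1 ≤ M) : 1 ≤ M.det := by
  have hH : M.IsHermitian := by simpa using (le_iff.mp hM).isHermitian.add isHermitian_one
  rw [hH.det_eq_prod_eigenvalues]
  exact Finset.one_le_prod fun i _ =>
    (CFC.one_le_iff M hH.isSelfAdjoint).mp hM _ (hH.eigenvalues_mem_spectrum_real i)

theorem PosDef.det_le_det_of_le {A B : Matrix ι ι ℝ} (hA : A.PosDef) (hAB : A ≤ B) :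
    A.det ≤ B.det := by
  set Q := CFC.sqrt A
  have hQ : IsUnit Q.det :=
    (isUnit_iff_isUnit_det Q).mp ((CFC.isUnit_sqrt_iff A hA.posSemidef.nonneg).mpr hA.isUnit)
  have hQA : Q⁻¹ * A * Q⁻¹ = 1 := by
    rw [← CFC.sqrt_mul_sqrt_self A hA.posSemidef.nonneg, ← Matrix.mul_assoc,
      nonsing_inv_mul _ hQ, Matrix.one_mul, mul_nonsing_inv _ hQ]
  have hQB : 1 ≤ Q⁻¹ * B * Q⁻¹ :=
    hQA ▸ IsSelfAdjoint.conjugate_le_conjugate hAB (CFC.sqrt_nonneg A).posSemidef.inv.isHermitian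
  have hdetA : Q⁻¹.det * Q⁻¹.det * A.det = 1 := by
    simpa only [det_mul, det_one, mul_right_comm] using congrArg det hQA
  have hdetB : 1 ≤ Q⁻¹.det * Q⁻¹.det * B.det := by
    simpa only [det_mul, mul_right_comm] using one_le_det_of_one_le hQB
  have hpos : 0 < Q⁻¹.det * Q⁻¹.det :=
    mul_self_pos.mpr (left_ne_zero_of_mul (left_ne_zero_of_mul_eq_one hdetA))
  exact le_of_mul_le_mul_left (hdetA ▸ hdetB) hpos

end Matrix

variable {𝕜 ι κ : Type*} [Fintype ι] [Fintype κ]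

section Riccati

variable [DecidableEq κ] [CommRing 𝕜]
  (C F : Matrix ι ι 𝕜) (B : Matrix ι κ 𝕜) (R : Matrix κ κ 𝕜) (W : Matrix ι ι 𝕜)

noncomputable def riccatiStep : Matrix ι ι 𝕜 :=
  C + Fᵀ * W * F - Fᵀ * W * B * (R + Bᵀ * W * B)⁻¹ * Bᵀ * W * F

noncomputable def riccatiGain : Matrix κ ι 𝕜 :=
  -(R + Bᵀ * W * B)⁻¹ * Bᵀ * W * F

variable {C F B R W}

theorem mul_riccatiGain (hS : IsUnit (R + Bᵀ * W * B).det) :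
    (R + Bᵀ * W * B) * riccatiGain F B R W = -(Bᵀ * W * F) := by
  simp only [riccatiGain, Matrix.neg_mul, Matrix.mul_neg, ← Matrix.mul_assoc,
    mul_nonsing_inv _ hS, Matrix.one_mul]

theorem riccatiStep_eq_closedLoop_add (hS : IsUnit (R + Bᵀ * W * B).det) :
    riccatiStep C F B R W = C
      + (F + B * riccatiGain F B R W)ᵀ * W * (F + B * riccatiGain F B R W)
      + (riccatiGain F B R W)ᵀ * R * riccatiGain F B R W := by
  set K := riccatiGain F B R W with hK
  calc riccatiStep C F B R W = C + Fᵀ * W * F + Fᵀ * W * B * K := by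
        simp only [riccatiStep, hK, riccatiGain, Matrix.neg_mul, Matrix.mul_neg, Matrix.mul_assoc,
          sub_eq_add_neg]
    _ = C + Fᵀ * W * F + Fᵀ * W * B * K + Kᵀ * ((R + Bᵀ * W * B) * K + Bᵀ * W * F) := by
        rw [mul_riccatiGain hS, neg_add_cancel, Matrix.mul_zero, add_zero]
    _ = _ := by
        simp only [transpose_add, transpose_mul, Matrix.mul_add, Matrix.add_mul, Matrix.mul_assoc]
        abel

theorem openLoop_sub_riccatiStep (Y : Matrix ι ι 𝕜) (hW : Wᵀ = W) :
    C + Fᵀ * Y * F - riccatiStep C F B R W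
      = Fᵀ * (Y - W) * F + (Bᵀ * W * F)ᵀ * (R + Bᵀ * W * B)⁻¹ * (Bᵀ * W * F) := by
  simp only [riccatiStep, transpose_mul, transpose_transpose, hW, Matrix.mul_sub, Matrix.sub_mul,
    Matrix.mul_assoc]
  abel

end Riccati

section Loewner

variable {C F W : Matrix ι ι ℝ} {B : Matrix ι κ ℝ} {R : Matrix κ κ ℝ}

theorem posDef_add_transpose_mul_mul (hR : R.PosDef) (hW : W.PosSemidef) :
    (R + Bᵀ * W * B).PosDef :=
  hR.add_posSemidef (hW.transpose_mul_mul_same B)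

variable [DecidableEq κ]

theorem posSemidef_riccatiStep (hC : C.PosSemidef) (hR : R.PosDef) (hW : W.PosSemidef) :
    (riccatiStep C F B R W).PosSemidef := by
  rw [riccatiStep_eq_closedLoop_add (posDef_add_transpose_mul_mul hR hW).det_pos.ne'.isUnit]
  exact (hC.add (hW.transpose_mul_mul_same _)).add (hR.posSemidef.transpose_mul_mul_same _)

theorem posSemidef_riccatiStep_sub_closedLoop {X : Matrix ι ι ℝ} (hR : R.PosDef)
    (hW : W.PosSemidef) (hWX : (W - X).PosSemidef) :
    (riccatiStep C F B R W - (C + (F + B * riccatiGain F B R W)ᵀ * X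
      * (F + B * riccatiGain F B R W))).PosSemidef := by
  rw [riccatiStep_eq_closedLoop_add (posDef_add_transpose_mul_mul hR hW).det_pos.ne'.isUnit]
  set K := riccatiGain F B R W
  have h : C + (F + B * K)ᵀ * W * (F + B * K) + Kᵀ * R * K
      - (C + (F + B * K)ᵀ * X * (F + B * K))
      = (F + B * K)ᵀ * (W - X) * (F + B * K) + Kᵀ * R * K := by
    rw [Matrix.mul_sub, Matrix.sub_mul]
    abel
  rw [h]
  exact (hWX.transpose_mul_mul_same _).add (hR.posSemidef.transpose_mul_mul_same _)

theorem posSemidef_openLoop_sub_riccatiStep {Y : Matrix ι ι ℝ} (hR : R.PosDef)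
    (hW : W.PosSemidef) (hYW : (Y - W).PosSemidef) :
    (C + Fᵀ * Y * F - riccatiStep C F B R W).PosSemidef := by
  rw [openLoop_sub_riccatiStep Y (conjTranspose_eq_transpose_of_trivial W ▸ hW.isHermitian)]
  exact (hYW.transpose_mul_mul_same F).add
    ((posDef_add_transpose_mul_mul hR hW).inv.posSemidef.transpose_mul_mul_same _)

end Loewner

theorem cip_sandwich {n m : ℕ} (T : ℕ)
    (C F V X Y : ℕ → Matrix (Fin n) (Fin n) ℝ)
    (B : ℕ → Matrix (Fin n) (Fin m) ℝ)
    (R : ℕ → Matrix (Fin m) (Fin m) ℝ)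
    (K : ℕ → Matrix (Fin m) (Fin n) ℝ)
    (hC : ∀ t ≤ T, (C t).PosSemidef)
    (hR : ∀ t < T, (R t).PosDef)
    (hK : ∀ t < T, K t = -(R t + (B t)ᵀ * V (t + 1) * B t)⁻¹ * (B t)ᵀ * V (t + 1) * F t)
    (hVT : V T = C T) (hXT : X T = C T) (hYT : Y T = C T)
    (hV : ∀ t < T, V t = C t + (F t)ᵀ * V (t + 1) * F t
      - (F t)ᵀ * V (t + 1) * B t * (R t + (B t)ᵀ * V (t + 1) * B t)⁻¹
        * (B t)ᵀ * V (t + 1) * F t)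
    (hX : ∀ t < T, X t = C t
      + (F t + B t * K t)ᵀ * X (t + 1) * (F t + B t * K t))
    (hY : ∀ t < T, Y t = C t + (F t)ᵀ * Y (t + 1) * F t) :
    (V 0 - X 0).PosSemidef ∧ (Y 0 - V 0).PosSemidef ∧
    ((X 0).PosDef →
      Real.log (X 0).det ≤ Real.log (V 0).det ∧
      Real.log (V 0).det ≤ Real.log (Y 0).det) := by
  have sandwich : ∀ t ≤ T,
      (V t).PosSemidef ∧ (V t - X t).PosSemidef ∧ (Y t - V t).PosSemidef := by
    intro t ht
    induction ht using Nat.decreasingInduction with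
    | self =>
      rw [hVT, hXT, hYT, sub_self]
      exact ⟨hC T le_rfl, .zero, .zero⟩
    | of_succ t htT ih =>
      obtain ⟨hW, hWX, hYW⟩ := ih
      have hVt : V t = riccatiStep (C t) (F t) (B t) (R t) (V (t + 1)) := hV t htT
      have hKt : K t = riccatiGain (F t) (B t) (R t) (V (t + 1)) := hK t htT
      rw [hX t htT, hY t htT, hKt, hVt]
      exact ⟨posSemidef_riccatiStep (hC t htT.le) (hR t htT) hW,
        posSemidef_riccatiStep_sub_closedLoop (hR t htT) hW hWX,
        posSemidef_openLoop_sub_riccatiStep (hR t htT) hW hYW⟩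
  obtain ⟨-, hXV, hVY⟩ := sandwich 0 T.zero_le
  refine ⟨hXV, hVY, fun hX0 => ?_⟩
  have hV0 : (V 0).PosDef := by simpa using hX0.add_posSemidef hXV
  exact ⟨Real.log_le_log hX0.det_pos (hX0.det_le_det_of_le hXV),
    Real.log_le_log hV0.det_pos (hV0.det_le_det_of_le hVY)⟩
end

section
/- Let F be a symmetric n×n matrix with eigenvalues μ_1, …, μ_n. Then lim_{T→∞} (1/(2T))·ln det(∑_{t=0}^{T} F^{2t}) = ∑_{i : |μ_i| > 1} ln|μ_i|. -/
/-!
Diagonalising `F = U D Uᴴ` turns `∑_{t ≤ T} F^{2t}` into `U (∑_{t ≤ T} D^{2t}) Uᴴ`, so its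
determinant is `∏ᵢ ∑_{t ≤ T} (μᵢ²)ᵗ`. For `a ≥ 0` the geometric sum `∑_{t ≤ T} aᵗ` lies between
`max 1 a ^ T` and `(T + 1) · max 1 a ^ T`, so its logarithm grows like `T · log⁺ a`; with `a = μᵢ²`
this gives the rate `2 log⁺ μᵢ`, and `log⁺ μᵢ` is `log |μᵢ|` exactly when `|μᵢ| > 1`.
-/

open Filter Finset Real Topology

theorem tendsto_log_natCast_add_one_div_atTop :
    Tendsto (fun T : ℕ => log (T + 1) / T) atTop (𝓝 0) := by
  have h := (tendsto_pow_log_div_mul_add_atTop 1 (-1) 1 one_ne_zero).comp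
    (tendsto_atTop_add_const_right _ 1 tendsto_natCast_atTop_atTop)
  refine h.congr fun T => ?_
  simp

theorem pow_max_one_le_sum_range_pow {a : ℝ} (ha : 0 ≤ a) (T : ℕ) :
    max 1 a ^ T ≤ ∑ t ∈ range (T + 1), a ^ t := by
  have hmem : ∀ t ≤ T, a ^ t ≤ ∑ t ∈ range (T + 1), a ^ t := fun t ht =>
    single_le_sum (f := (a ^ ·)) (fun i _ => pow_nonneg ha i) (mem_range_succ_iff.mpr ht)
  rcases le_total a 1 with h | h
  · simpa [max_eq_left h] using hmem 0 T.zero_le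
  · simpa [max_eq_right h] using hmem T le_rfl

theorem sum_range_pow_le_mul_pow_max_one {a : ℝ} (ha : 0 ≤ a) (T : ℕ) :
    ∑ t ∈ range (T + 1), a ^ t ≤ (T + 1) * max 1 a ^ T := by
  calc ∑ t ∈ range (T + 1), a ^ t ≤ ∑ _t ∈ range (T + 1), max 1 a ^ T :=
        sum_le_sum fun t ht => (pow_le_pow_left₀ ha (le_max_right 1 a) t).trans
          (pow_le_pow_right₀ (le_max_left 1 a) (mem_range_succ_iff.mp ht))
    _ = (T + 1) * max 1 a ^ T := by simp

theorem tendsto_log_sum_range_pow_div_atTop {a : ℝ} (ha : 0 ≤ a) :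
    Tendsto (fun T : ℕ => log (∑ t ∈ range (T + 1), a ^ t) / T) atTop (𝓝 (log⁺ a)) := by
  set m := max 1 a
  have hm : 0 < m := one_pos.trans_le (le_max_left 1 a)
  rw [posLog_eq_log_max_one ha]
  have hupper := tendsto_log_natCast_add_one_div_atTop.add_const (log m)
  rw [zero_add] at hupper
  refine tendsto_of_tendsto_of_tendsto_of_le_of_le' tendsto_const_nhds hupper ?_ ?_ <;>
    filter_upwards [eventually_gt_atTop 0] with T hT <;>
    have hT' : (0 : ℝ) < T := Nat.cast_pos.mpr hT
  · rw [le_div_iff₀ hT', mul_comm, ← log_pow]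
    exact log_le_log (pow_pos hm T) (pow_max_one_le_sum_range_pow ha T)
  · rw [div_add' _ _ _ hT'.ne', div_le_div_iff_of_pos_right hT', mul_comm, ← log_pow,
      ← log_mul (by positivity) (pow_pos hm T).ne']
    exact log_le_log ((pow_pos hm T).trans_le (pow_max_one_le_sum_range_pow ha T))
      (sum_range_pow_le_mul_pow_max_one ha T)

theorem Real.posLog_eq_ite (x : ℝ) : log⁺ x = if 1 < |x| then log |x| else 0 := by
  split_ifs with h
  · rw [posLog_eq_log h.le, log_abs]
  · exact (posLog_eq_zero_iff x).mpr (not_lt.mp h)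

open Matrix Polynomial

theorem Matrix.IsHermitian.det_aeval {𝕜 ι : Type*} [RCLike 𝕜] [Fintype ι] [DecidableEq ι]
    {A : Matrix ι ι 𝕜} (hA : A.IsHermitian) (p : 𝕜[X]) :
    (aeval A p).det = ∏ i, p.eval (hA.eigenvalues i : 𝕜) := by
  conv_lhs => rw [hA.spectral_theorem, aeval_algHom_apply, Unitary.conjStarAlgAut_apply,
    ← diagonalAlgHom_apply 𝕜, aeval_algHom_apply, det_mul_comm, ← mul_assoc,
    Unitary.coe_star_mul_self, one_mul, diagonalAlgHom_apply, det_diagonal, aeval_pi_apply]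
  rfl

theorem pesin_type_formula {n : ℕ}
    (F : Matrix (Fin n) (Fin n) ℝ) (hF : F.IsHermitian) :
    Tendsto (fun T : ℕ =>
        (1 / (2 * (T : ℝ))) *
          Real.log (∑ t ∈ Finset.range (T + 1), F ^ (2 * t)).det)
      atTop
      (nhds (∑ i ∈ Finset.univ.filter (fun i => 1 < |hF.eigenvalues i|),
        Real.log |hF.eigenvalues i|)) := by
  set μ := hF.eigenvalues
  have hdet (T : ℕ) : (∑ t ∈ range (T + 1), F ^ (2 * t)).det =
      ∏ i, ∑ t ∈ range (T + 1), (μ i ^ 2) ^ t := by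
    simpa [map_sum, eval_finsetSum, pow_mul] using hF.det_aeval (∑ t ∈ range (T + 1), X ^ (2 * t))
  have hpos (i : Fin n) (T : ℕ) : 0 < ∑ t ∈ range (T + 1), (μ i ^ 2) ^ t :=
    (pow_pos (one_pos.trans_le (le_max_left _ _)) T).trans_le
      (pow_max_one_le_sum_range_pow (sq_nonneg (μ i)) T)
  have hrate (i : Fin n) : Tendsto (fun T : ℕ => (1 / (2 * (T : ℝ))) *
      log (∑ t ∈ range (T + 1), (μ i ^ 2) ^ t)) atTop (𝓝 (log⁺ (μ i))) := by
    have := (tendsto_log_sum_range_pow_div_atTop (sq_nonneg (μ i))).const_mul (1 / 2)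
    rw [posLog_pow] at this
    convert this using 2 <;> push_cast <;> ring
  simp_rw [sum_filter, ← Real.posLog_eq_ite, hdet,
    Real.log_prod fun i _ => (hpos i _).ne', mul_sum]
  exact tendsto_finsetSum _ fun i _ => hrate i
end

section
/- In the scalar LQR setting with |f| > 1, c > 0, r > 0, b ≠ 0, the fixed point v* of the scalar Riccati map v ↦ c + f²vr/(r + b²v) exists, is positive, and the resulting closed-loop coefficient f_cl = f·r/(r + b²v*) satisfies |f_cl| < 1. -/
/-!
Clearing denominators turns the fixed-point equation `v = g v` into the quadratic
`b² v² + (r - c b² - f² r) v - c r = 0`, with positive leading and negative constant coefficient, so it has a positive root.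
Stability then comes from the Lyapunov form of the Riccati map: with gain `k = f b v / (r + b² v)`
one has `g v = c + r k² + f_cl² v`, so at a fixed point `v > f_cl² v`.
-/

namespace ScalarLQR

noncomputable def riccatiMap (f b c r v : ℝ) : ℝ := c + f ^ 2 * v * r / (r + b ^ 2 * v)

noncomputable def feedbackGain (f b r v : ℝ) : ℝ := f * b * v / (r + b ^ 2 * v)

noncomputable def closedLoopCoeff (f b r v : ℝ) : ℝ := f * r / (r + b ^ 2 * v)

theorem exists_pos_quadratic_root {a p q : ℝ} (ha : 0 < a) (hq : q < 0) :
    ∃ x, 0 < x ∧ a * (x * x) + p * x + q = 0 := by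
  set s := √(discrim a p q)
  have hdiscrim : discrim a p q = s * s := (Real.mul_self_sqrt (by unfold discrim; nlinarith)).symm
  have hps : p < s := by
    have : p * p < s * s := by rw [← hdiscrim, discrim]; nlinarith
    nlinarith [Real.sqrt_nonneg (discrim a p q)]
  exact ⟨(-p + s) / (2 * a), div_pos (by linarith) (by positivity),
    (quadratic_eq_zero_iff ha.ne' hdiscrim _).2 (.inl rfl)⟩

theorem riccatiMap_eq_self_of_quadratic {f b c r v : ℝ} (hr : 0 < r) (hv : 0 ≤ v)
    (h : b ^ 2 * (v * v) + (r - c * b ^ 2 - f ^ 2 * r) * v + -(c * r) = 0) :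
    riccatiMap f b c r v = v := by
  have hden : r + b ^ 2 * v ≠ 0 := by positivity
  unfold riccatiMap
  field_simp
  linear_combination -h

theorem riccatiMap_eq_lyapunov {f b c r v : ℝ} (hr : 0 < r) (hv : 0 ≤ v) :
    riccatiMap f b c r v = c + r * feedbackGain f b r v ^ 2 + closedLoopCoeff f b r v ^ 2 * v := by
  unfold riccatiMap feedbackGain closedLoopCoeff
  field_simp
  ring

theorem abs_closedLoopCoeff_lt_one {f b c r v : ℝ} (hc : 0 < c) (hr : 0 < r) (hv : 0 < v)
    (hfix : riccatiMap f b c r v = v) : |closedLoopCoeff f b r v| < 1 := by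
  have hlyap := riccatiMap_eq_lyapunov (f := f) (b := b) (c := c) hr hv.le
  have hgain : 0 ≤ r * feedbackGain f b r v ^ 2 := by positivity
  have : closedLoopCoeff f b r v ^ 2 * v < 1 * v := by linarith
  exact (sq_lt_one_iff_abs_lt_one _).1 (lt_of_mul_lt_mul_right this hv.le)

end ScalarLQR

open ScalarLQR in
theorem scalar_lqr_stabilizes_general (f b c r : ℝ)
    (hc : 0 < c) (hr : 0 < r) (hb : b ≠ 0) :
    ∃ v : ℝ, 0 < v ∧ v = c + f ^ 2 * v * r / (r + b ^ 2 * v) ∧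
      |f * r / (r + b ^ 2 * v)| < 1 := by
  obtain ⟨v, hv, hquad⟩ := exists_pos_quadratic_root (a := b ^ 2) (p := r - c * b ^ 2 - f ^ 2 * r)
    (by positivity) (neg_neg_of_pos (mul_pos hc hr))
  have hfix := riccatiMap_eq_self_of_quadratic hr hv.le hquad
  exact ⟨v, hv, hfix.symm, abs_closedLoopCoeff_lt_one hc hr hv hfix⟩

theorem scalar_lqr_stabilizes (f b c r : ℝ)
    (hf : 1 < |f|) (hc : 0 < c) (hr : 0 < r) (hb : b ≠ 0) :
    ∃ v : ℝ, 0 < v ∧ v = c + f ^ 2 * v * r / (r + b ^ 2 * v) ∧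
      |f * r / (r + b ^ 2 * v)| < 1 :=
  scalar_lqr_stabilizes_general f b c r hc hr hb
end

section
/- Let P be a symmetric positive definite n×n matrix, B an n×m matrix, and R a symmetric positive definite m×m matrix. Then P − P B (R + B^T P B)^{-1} B^T P is positive definite. -/
open Matrix

theorem riccati_update_posdef {n m : ℕ}
    (P : Matrix (Fin n) (Fin n) ℝ) (B : Matrix (Fin n) (Fin m) ℝ)
    (R : Matrix (Fin m) (Fin m) ℝ)
    (hP : P.PosDef) (hR : R.PosDef) :
    (P - P * B * (R + Bᵀ * P * B)⁻¹ * Bᵀ * P).PosDef := by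
  have hPinv : P⁻¹⁻¹ = P :=
    Matrix.nonsing_inv_nonsing_inv _ ((Matrix.isUnit_iff_isUnit_det P).mp hP.isUnit)
  have hRinv : R⁻¹⁻¹ = R :=
    Matrix.nonsing_inv_nonsing_inv _ ((Matrix.isUnit_iff_isUnit_det R).mp hR.isUnit)
  have hBPB : (R + Bᵀ * P * B).PosDef := by
    have h1 : (Bᵀ * P * B).PosSemidef := by
      have := hP.posSemidef.mul_mul_conjTranspose_same Bᵀ
      simpa [Matrix.mul_assoc] using this
    exact hR.add_posSemidef h1
  have hsum : (P⁻¹ + B * R⁻¹ * Bᵀ).PosDef := by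
    have h2 : (B * R⁻¹ * Bᵀ).PosSemidef := by
      have := hR.inv.posSemidef.mul_mul_conjTranspose_same B
      simpa [Matrix.mul_assoc] using this
    exact hP.inv.add_posSemidef h2
  have hAC : IsUnit (R⁻¹⁻¹ + Bᵀ * P⁻¹⁻¹ * B) := by
    rw [hPinv, hRinv]; exact hBPB.isUnit
  have hwood : (P⁻¹ + B * R⁻¹ * Bᵀ)⁻¹
      = P - P * B * (R + Bᵀ * P * B)⁻¹ * Bᵀ * P := by
    rw [Matrix.add_mul_mul_inv_eq_sub _ _ _ _ hP.inv.isUnit hR.inv.isUnit hAC,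
      hPinv, hRinv]
  rw [← hwood]
  exact hsum.inv
end
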